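/- arXiv:1210.7217 — 5 statements merged into one kernel-verified Lean document; each statement's English description precedes it below -/
import Mathlib

section
/- Let d ≥ 1 and let J and K be d×d real matrices satisfying J Jᵀ + K Kᵀ = I and tr(J) ≥ d, where I is the d×d identity matrix. Then J = I. -/
open Matrix

theorem stmt_0 (d : ℕ) (hd : 1 ≤ d) (J K : Matrix (Fin d) (Fin d) ℝ)
    (h : J * Jᵀ + K * Kᵀ = 1) (htr : (d : ℝ) ≤ J.trace) : J = 1 := by
  have key : ∀ i, ∑ j, J i j * J i j ≤ 1 := by
    intro i
    have h1 := congrFun (congrFun h i) i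
    simp only [Matrix.add_apply, Matrix.mul_apply, Matrix.transpose_apply,
      Matrix.one_apply_eq] at h1
    have h2 : (0:ℝ) ≤ ∑ j, K i j * K i j :=
      Finset.sum_nonneg (fun j _ => mul_self_nonneg _)
    linarith
  have diag_le : ∀ i, J i i ≤ 1 := by
    intro i
    have h1 := key i
    have h2 : J i i * J i i ≤ ∑ j, J i j * J i j :=
      Finset.single_le_sum (fun j _ => mul_self_nonneg (J i j)) (Finset.mem_univ i)
    nlinarith
  have diag_eq : ∀ i, J i i = 1 := by
    by_contra hc
    push_neg at hc
    obtain ⟨i, hi⟩ := hc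
    have hlt : J i i < 1 := lt_of_le_of_ne (diag_le i) hi
    have hsum : J.trace < ∑ _j : Fin d, (1:ℝ) :=
      Finset.sum_lt_sum (fun j _ => diag_le j) ⟨i, Finset.mem_univ i, hlt⟩
    simp [Finset.sum_const, Finset.card_univ] at hsum
    linarith
  ext i j
  rcases eq_or_ne i j with rfl | hij
  · simp [diag_eq i]
  · have h1 := key i
    have hsplit : ∑ k, J i k * J i k
        = J i i * J i i + ∑ k ∈ Finset.univ.erase i, J i k * J i k :=
      (Finset.add_sum_erase _ _ (Finset.mem_univ i)).symm
    have h2 : ∑ k ∈ Finset.univ.erase i, J i k * J i k ≤ 0 := by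
      rw [hsplit, diag_eq i] at h1; linarith
    have h3 : ∑ k ∈ Finset.univ.erase i, J i k * J i k = 0 :=
      le_antisymm h2 (Finset.sum_nonneg (fun k _ => mul_self_nonneg _))
    have h4 : J i j * J i j = 0 := by
      have := (Finset.sum_eq_zero_iff_of_nonneg
        (fun k _ => mul_self_nonneg (J i k))).mp h3 j
        (Finset.mem_erase.mpr ⟨hij.symm, Finset.mem_univ j⟩)
      exact this
    have : J i j = 0 := by nlinarith
    simp [this, Matrix.one_apply, hij]
end

section
/- Let x, y ∈ ℝ³ be unit vectors with y ≠ ±x, let R_{x,y} be the Rodrigues rotation matrix associated to x and y, and set M = R_{x,y} − R_{x,y} x xᵀ − I + x xᵀ = (R_{x,y} − I)(I − x xᵀ). Then (y − x)ᵀ M = 0 (the zero row vector). -/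
open Matrix Real

lemma vecMul_vecMulVec' (v w z : Fin 3 → ℝ) :
    v ᵥ* vecMulVec w z = (v ⬝ᵥ w) • z := by
  ext j
  simp [vecMul, vecMulVec_apply, dotProduct, Finset.sum_mul, mul_assoc]

lemma vecMul_smulMat (v : Fin 3 → ℝ) (a : ℝ) (A : Matrix (Fin 3) (Fin 3) ℝ) :
    v ᵥ* (a • A) = a • (v ᵥ* A) := by
  ext j
  simp [vecMul, dotProduct, Matrix.smul_apply, Finset.mul_sum, mul_left_comm]

theorem stmt_4 (x y : Fin 3 → ℝ) (hx : x ⬝ᵥ x = 1) (hy : y ⬝ᵥ y = 1)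
    (hne : y ≠ x) (hne' : y ≠ -x)
    (θ : ℝ) (hθ : θ ∈ Set.Ioo 0 π) (hcos : Real.cos θ = x ⬝ᵥ y)
    (u : Fin 3 → ℝ) (hu : u = crossProduct x y)
    (R : Matrix (Fin 3) (Fin 3) ℝ)
    (hR : R = Real.cos θ • (1 : Matrix (Fin 3) (Fin 3) ℝ)
        + (vecMulVec y x - vecMulVec x y)
        + (1 / (1 + Real.cos θ)) • vecMulVec u u)
    (M : Matrix (Fin 3) (Fin 3) ℝ)
    (hM : M = (R - 1) * (1 - vecMulVec x x)) :
    (y - x) ᵥ* M = 0 := by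
  set c : ℝ := Real.cos θ with hc
  have hd : (y - x) ⬝ᵥ u = 0 := by
    subst hu
    simp [dotProduct, crossProduct, Fin.sum_univ_three]
    ring
  have hvy : (y - x) ⬝ᵥ y = 1 - c := by
    rw [sub_dotProduct, hy, hcos, dotProduct_comm]
  have hvx : (y - x) ⬝ᵥ x = c - 1 := by
    rw [sub_dotProduct, hx, hcos, dotProduct_comm]
  have h1 : (y - x) ᵥ* (R - 1) = (2 * (1 - c)) • x := by
    rw [hR]
    ext j
    simp only [Matrix.vecMul_add, Matrix.vecMul_sub, Matrix.smul_vecMul,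
      Matrix.vecMul_one, vecMul_smulMat, vecMul_vecMulVec', hvy, hvx, hd, Pi.add_apply, Pi.sub_apply,
      Pi.smul_apply, smul_eq_mul, zero_smul, Pi.zero_apply]
    ring
  have h2 : (x ᵥ* (1 - vecMulVec x x)) = 0 := by
    rw [Matrix.vecMul_sub, Matrix.vecMul_one, vecMul_vecMulVec', hx, one_smul, sub_self]
  rw [hM, ← Matrix.vecMul_vecMul, h1, Matrix.smul_vecMul, h2, smul_zero]
end

section
/- Let x, y ∈ ℝ³ be unit vectors with y ≠ ±x, let R_{x,y} be the Rodrigues rotation matrix associated to x and y, and set M = (R_{x,y} − I)(I − x xᵀ). Then tr(M Mᵀ) = 2 − 2 xᵀy = ‖x − y‖². -/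
open Matrix Real

private lemma vmv_mul (a b c d : Fin 3 → ℝ) :
    vecMulVec a b * vecMulVec c d = (b ⬝ᵥ c) • vecMulVec a d := by
  ext i j
  simp only [Matrix.mul_apply, vecMulVec_apply, Matrix.smul_apply, dotProduct,
    Fin.sum_univ_three, smul_eq_mul]
  ring

private lemma trace_vmv (a b : Fin 3 → ℝ) : (vecMulVec a b).trace = a ⬝ᵥ b := by
  simp [trace, diag, vecMulVec_apply, dotProduct]

private lemma vmv_transpose (a b : Fin 3 → ℝ) : (vecMulVec a b)ᵀ = vecMulVec b a := by
  ext i j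
  simp [vecMulVec_apply, mul_comm]

set_option maxHeartbeats 1000000 in
theorem stmt_5 (x y : Fin 3 → ℝ) (hx : x ⬝ᵥ x = 1) (hy : y ⬝ᵥ y = 1)
    (hne : y ≠ x) (hne' : y ≠ -x)
    (θ : ℝ) (hθ : θ ∈ Set.Ioo 0 π) (hcos : Real.cos θ = x ⬝ᵥ y)
    (u : Fin 3 → ℝ) (hu : u = crossProduct x y)
    (R : Matrix (Fin 3) (Fin 3) ℝ)
    (hR : R = Real.cos θ • (1 : Matrix (Fin 3) (Fin 3) ℝ)
        + (vecMulVec y x - vecMulVec x y)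
        + (1 / (1 + Real.cos θ)) • vecMulVec u u)
    (M : Matrix (Fin 3) (Fin 3) ℝ)
    (hM : M = (R - 1) * (1 - vecMulVec x x)) :
    (M * Mᵀ).trace = 2 - 2 * (x ⬝ᵥ y) ∧
    (M * Mᵀ).trace = (x - y) ⬝ᵥ (x - y) := by
  have hsin : Real.sin θ > 0 := Real.sin_pos_of_pos_of_lt_pi hθ.1 hθ.2
  have hpyth := Real.sin_sq_add_cos_sq θ
  have hc1 : Real.cos θ > -1 := by nlinarith
  have hcne : 1 + x ⬝ᵥ y ≠ 0 := by rw [← hcos]; intro h; linarith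
  set c := x ⬝ᵥ y with hc
  have hyx : y ⬝ᵥ x = c := dotProduct_comm y x
  have hxu : x ⬝ᵥ u = 0 := by rw [hu]; exact dot_self_cross x y
  have hyu : y ⬝ᵥ u = 0 := by rw [hu]; exact dot_cross_self x y
  have hux : u ⬝ᵥ x = 0 := by rw [dotProduct_comm]; exact hxu
  have huy : u ⬝ᵥ y = 0 := by rw [dotProduct_comm]; exact hyu
  have huu : u ⬝ᵥ u = 1 - c * c := by
    rw [hu]
    have := cross_dot_cross x y x y
    rw [hx, hy, hyx, ← hc] at this
    rw [this]; ring
  have hM2 : M = (c - 1) • (1 : Matrix (Fin 3) (Fin 3) ℝ) + vecMulVec x x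
      - vecMulVec x y + (1 / (1 + c)) • vecMulVec u u := by
    rw [hM, hR, hcos]
    simp only [mul_sub, sub_mul, add_mul, smul_mul_assoc, mul_one, one_mul,
      vmv_mul, hyx, hux, hx, zero_smul, smul_zero, one_smul]
    module
  have key : (M * Mᵀ).trace = 2 - 2 * c := by
    rw [hM2]
    simp only [transpose_add, transpose_sub, transpose_smul, transpose_one, vmv_transpose]
    simp only [mul_add, add_mul, mul_sub, sub_mul, smul_mul_assoc, mul_smul_comm,
      mul_one, one_mul, vmv_mul, hyx, hux, huy, hxu, hyu, hx, hy, huu, smul_smul,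
      trace_add, trace_sub, trace_smul, trace_one, trace_vmv, smul_eq_mul, ← hc]
    simp only [Fintype.card_fin, Nat.cast_ofNat]
    field_simp
    ring
  refine ⟨key, ?_⟩
  rw [key]
  simp only [sub_dotProduct, dotProduct_sub, hx, hy, hyx, ← hc]
  ring
end

section
/- Let X, Y ∈ ℝ³ be unit vectors with Y ≠ ±X and set c = XᵀY. Then there exist 3×3 real matrices J and K such that: (i) XᵀJY = c·tr(J) − 1 − c²; (ii) XᵀJX + YᵀJY − c·YᵀJX = tr(J) − 2c; and (iii) J Jᵀ + K Kᵀ = I. -/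
/-!
Take `n = X × Y` and let `J` act by `Z ↦ c Z + n × Z`, i.e. `J = c I + [n]ₓ` with `[n]ₓ` the
skew-symmetric cross-product matrix, and `K = n Xᵀ`. Since `[n]ₓ² = n nᵀ - |n|² I` and, by Lagrange's
identity, `|n|² = 1 - c²`, we get `J Jᵀ = I - n nᵀ`, while `K Kᵀ = |X|² n nᵀ = n nᵀ`. The two scalar
conditions reduce to triple products: `X ⬝ (n × Y) = -|n|²`, `Y ⬝ (n × X) = |n|²` and
`X ⬝ (n × X) = Y ⬝ (n × Y) = 0`.
-/

open Matrix

section CrossMatrix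

variable {R : Type*} [CommRing R]

def crossMatrix (n : Fin 3 → R) : Matrix (Fin 3) (Fin 3) R :=
  !![0, -n 2, n 1; n 2, 0, -n 0; -n 1, n 0, 0]

theorem crossMatrix_mulVec (n v : Fin 3 → R) : crossMatrix n *ᵥ v = n ⨯₃ v := by
  ext i
  fin_cases i <;> simp [crossMatrix, cross_apply, mulVec, dotProduct, Fin.sum_univ_three] <;> ring

theorem transpose_crossMatrix (n : Fin 3 → R) : (crossMatrix n)ᵀ = -crossMatrix n := by
  ext i j
  fin_cases i <;> fin_cases j <;> simp [crossMatrix]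

theorem trace_crossMatrix (n : Fin 3 → R) : (crossMatrix n).trace = 0 := by
  simp [crossMatrix, trace_fin_three]

theorem crossMatrix_mul_self (n : Fin 3 → R) :
    crossMatrix n * crossMatrix n = vecMulVec n n - (n ⬝ᵥ n) • 1 := by
  ext i j
  fin_cases i <;> fin_cases j <;>
    simp [crossMatrix, vecMulVec_apply, vec3_dotProduct, one_apply] <;> ring

theorem smul_one_add_crossMatrix_mul_transpose (c : R) (n : Fin 3 → R) :
    (c • 1 + crossMatrix n) * (c • 1 + crossMatrix n)ᵀ =
      (c ^ 2 + n ⬝ᵥ n) • 1 - vecMulVec n n := by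
  rw [transpose_add, transpose_smul, transpose_one, transpose_crossMatrix]
  simp only [add_mul, mul_add, mul_neg, crossMatrix_mul_self, Matrix.smul_mul, Matrix.mul_smul,
    Matrix.one_mul, Matrix.mul_one, smul_smul]
  module

theorem trace_smul_one_add_crossMatrix (c : R) (n : Fin 3 → R) :
    (c • 1 + crossMatrix n).trace = 3 * c := by
  simp [trace_crossMatrix, mul_comm]

theorem dotProduct_smul_one_add_crossMatrix_mulVec (c : R) (n u v : Fin 3 → R) :
    u ⬝ᵥ (c • 1 + crossMatrix n) *ᵥ v = c * (u ⬝ᵥ v) + u ⬝ᵥ n ⨯₃ v := by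
  rw [add_mulVec, smul_mulVec, one_mulVec, crossMatrix_mulVec, dotProduct_add,
    dotProduct_smul, smul_eq_mul]

theorem vecMulVec_mul_transpose (n x : Fin 3 → R) :
    vecMulVec n x * (vecMulVec n x)ᵀ = (x ⬝ᵥ x) • vecMulVec n n := by
  rw [transpose_vecMulVec, vecMulVec_mul_vecMulVec, vecMulVec_smul]

theorem cross_dot_cross_self (u v : Fin 3 → R) :
    u ⨯₃ v ⬝ᵥ u ⨯₃ v = u ⬝ᵥ u * v ⬝ᵥ v - (u ⬝ᵥ v) ^ 2 := by
  rw [cross_dot_cross, dotProduct_comm v u, sq]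

end CrossMatrix

theorem stmt_7_general (X Y : Fin 3 → ℝ) (hX : X ⬝ᵥ X = 1) (hY : Y ⬝ᵥ Y = 1)
    (c : ℝ) (hc : c = X ⬝ᵥ Y) :
    ∃ J K : Matrix (Fin 3) (Fin 3) ℝ,
      X ⬝ᵥ J.mulVec Y = c * J.trace - 1 - c ^ 2 ∧
      X ⬝ᵥ J.mulVec X + Y ⬝ᵥ J.mulVec Y - c * (Y ⬝ᵥ J.mulVec X) = J.trace - 2 * c ∧
      J * Jᵀ + K * Kᵀ = 1 := by
  set n := X ⨯₃ Y
  have hn : n ⬝ᵥ n = 1 - c ^ 2 := by rw [cross_dot_cross_self, hX, hY, hc, one_mul]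
  refine ⟨c • 1 + crossMatrix n, vecMulVec n X, ?_, ?_, ?_⟩
  · have hXnY : X ⬝ᵥ n ⨯₃ Y = -(n ⬝ᵥ n) := by
      rw [triple_product_permutation, ← cross_anticomm, dotProduct_neg]
    simp only [dotProduct_smul_one_add_crossMatrix_mulVec, trace_smul_one_add_crossMatrix, hXnY,
      hn, ← hc]
    ring
  · have hYnX : Y ⬝ᵥ n ⨯₃ X = n ⬝ᵥ n := triple_product_permutation _ _ _
    simp only [dotProduct_smul_one_add_crossMatrix_mulVec, trace_smul_one_add_crossMatrix, hYnX,
      hn, hX, hY, dot_cross_self, dotProduct_comm Y X, ← hc]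
    ring
  · rw [smul_one_add_crossMatrix_mul_transpose, vecMulVec_mul_transpose, hX, hn]
    simp

theorem stmt_7 (X Y : Fin 3 → ℝ) (hX : X ⬝ᵥ X = 1) (hY : Y ⬝ᵥ Y = 1)
    (hne : Y ≠ X) (hne' : Y ≠ -X)
    (c : ℝ) (hc : c = X ⬝ᵥ Y) :
    ∃ J K : Matrix (Fin 3) (Fin 3) ℝ,
      X ⬝ᵥ J.mulVec Y = c * J.trace - 1 - c ^ 2 ∧
      X ⬝ᵥ J.mulVec X + Y ⬝ᵥ J.mulVec Y - c * (Y ⬝ᵥ J.mulVec X) = J.trace - 2 * c ∧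
      J * Jᵀ + K * Kᵀ = 1 :=
  stmt_7_general X Y hX hY c hc
end

section
/- Let d ≥ 2 be an integer, ρ₀ > 0, and let ρ : [0,∞) → (0,∞) be differentiable with ρ(0) = ρ₀ and ρ'(t) = (d−1)·coth(ρ(t)/2) for all t ≥ 0. Then ρ(t) = 2·arccosh(e^{(d−1)t/2}·cosh(ρ₀/2)) for all t ≥ 0. -/
open Real

/-- The inverse hyperbolic cosine: `arccosh x = log (x + √(x² − 1))` for `x ≥ 1`. -/
noncomputable def arccosh (x : ℝ) : ℝ := Real.log (x + Real.sqrt (x ^ 2 - 1))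

/-- The hyperbolic cotangent: `coth x = cosh x / sinh x`. -/
noncomputable def coth (x : ℝ) : ℝ := Real.cosh x / Real.sinh x

/-!
Along a solution of `ρ' = a coth (ρ / 2)` the chain rule gives
`(cosh (ρ / 2))' = sinh (ρ / 2) · a coth (ρ / 2) / 2 = (a / 2) cosh (ρ / 2)`,
so `e^{-a t / 2} cosh (ρ t / 2)` is conserved. Hence `cosh (ρ t / 2) = e^{a t / 2} cosh (ρ₀ / 2)`,
and inverting `cosh` on `[0, ∞)` gives the formula.
-/

theorem arccosh_eq_arcosh : arccosh = Real.arcosh := rfl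

theorem hasDerivWithinAt_exp_mul_cosh_half_of_coth {a t : ℝ} {ρ : ℝ → ℝ} {s : Set ℝ}
    (hρt : ρ t ≠ 0) (hρ : HasDerivWithinAt ρ (a * coth (ρ t / 2)) s t) :
    HasDerivWithinAt (fun u => exp (-(a * u / 2)) * cosh (ρ u / 2)) 0 s t := by
  have hsinh : sinh (ρ t / 2) ≠ 0 := by
    rw [Ne, sinh_eq_zero]
    exact div_ne_zero hρt two_ne_zero
  have hexp : HasDerivWithinAt (fun u => exp (-(a * u / 2)))
      (exp (-(a * t / 2)) * -(a / 2)) s t := by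
    simpa [mul_div_assoc] using
      (((hasDerivAt_id t).const_mul a).div_const 2).neg.exp.hasDerivWithinAt
  have hcosh := (hρ.div_const 2).cosh
  refine (hexp.mul hcosh).congr_deriv ?_
  rw [coth]
  field_simp
  ring

theorem cosh_half_eq_exp_mul_of_hasDerivWithinAt_coth {a : ℝ} {ρ : ℝ → ℝ}
    (hρ : ∀ t, 0 ≤ t → ρ t ≠ 0)
    (hderiv : ∀ t, 0 ≤ t → HasDerivWithinAt ρ (a * coth (ρ t / 2)) (Set.Ici 0) t)
    {t : ℝ} (ht : 0 ≤ t) :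
    cosh (ρ t / 2) = exp (a * t / 2) * cosh (ρ 0 / 2) := by
  set g : ℝ → ℝ := fun u => exp (-(a * u / 2)) * cosh (ρ u / 2)
  have hg_cont : ContinuousOn g (Set.Icc 0 t) := by
    have hρ_cont : ContinuousOn ρ (Set.Icc 0 t) := fun u hu =>
      ((hderiv u hu.1).continuousWithinAt).mono Set.Icc_subset_Ici_self
    exact (by fun_prop : Continuous fun u => exp (-(a * u / 2))).continuousOn.mul
      (continuous_cosh.comp_continuousOn (hρ_cont.div_const 2))
  have hg_deriv : ∀ u ∈ Set.Ico 0 t, HasDerivWithinAt g 0 (Set.Ici u) u := fun u hu =>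
    hasDerivWithinAt_exp_mul_cosh_half_of_coth (hρ u hu.1)
      ((hderiv u hu.1).mono (Set.Ici_subset_Ici.mpr hu.1))
  have hg : g t = g 0 := constant_of_has_deriv_right_zero hg_cont hg_deriv t ⟨ht, le_rfl⟩
  simp only [g, mul_zero, zero_div, neg_zero, exp_zero, one_mul] at hg
  rw [← hg, ← mul_assoc, ← exp_add]
  simp

theorem stmt_18_general (d : ℕ) (ρ₀ : ℝ)
    (ρ : ℝ → ℝ) (h0 : ρ 0 = ρ₀)
    (hmem : ∀ t : ℝ, 0 ≤ t → 0 < ρ t)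
    (hderiv : ∀ t : ℝ, 0 ≤ t →
      HasDerivWithinAt ρ (((d : ℝ) - 1) * coth (ρ t / 2)) (Set.Ici 0) t) :
    ∀ t : ℝ, 0 ≤ t →
      ρ t = 2 * arccosh (Real.exp (((d : ℝ) - 1) * t / 2) * Real.cosh (ρ₀ / 2)) := by
  intro t ht
  have hcosh := cosh_half_eq_exp_mul_of_hasDerivWithinAt_coth
    (fun u hu => (hmem u hu).ne') hderiv ht
  rw [← h0, ← hcosh, arccosh_eq_arcosh, arcosh_cosh (by linarith [hmem t ht])]
  ring

theorem stmt_18 (d : ℕ) (hd : 2 ≤ d) (ρ₀ : ℝ) (hρ₀ : 0 < ρ₀)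
    (ρ : ℝ → ℝ) (h0 : ρ 0 = ρ₀)
    (hmem : ∀ t : ℝ, 0 ≤ t → 0 < ρ t)
    (hderiv : ∀ t : ℝ, 0 ≤ t →
      HasDerivWithinAt ρ (((d : ℝ) - 1) * coth (ρ t / 2)) (Set.Ici 0) t) :
    ∀ t : ℝ, 0 ≤ t →
      ρ t = 2 * arccosh (Real.exp (((d : ℝ) - 1) * t / 2) * Real.cosh (ρ₀ / 2)) :=
  stmt_18_general d ρ₀ ρ h0 hmem hderiv
end
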